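/- arXiv:1306.1692 — 2 statements merged into one kernel-verified Lean document; each statement's English description precedes it below -/
import Mathlib

section
/- If two heaps H_i and H_j are merged into one heap H = H_i ∪ H_j (by assigning to the head of one of them a predecessor lying in the other heap, consistently with the max-heap property), then for every node u ∈ H_i the merged heap H becomes linearized with respect to u after at most |{v ∈ H_i : v ≥ u}| + |H_j| rounds of the linearization dynamics; that is, merging with H_j increases the linearization time of u by at most |H_j|. -/
/-- `pIter p k v` is the `k`-fold iterate of the partial predecessor map `p` starting at `v`. -/
def pIter {α : Type*} (p : α → Option α) : ℕ → α → Option α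
  | 0, v => some v
  | k + 1, v => (p v).bind (pIter p k)

/-- The max-heap property: whenever `p v` is defined for `v ∈ V`, it is a node of `V`
strictly larger than `v`. -/
def HeapProp {α : Type*} [LinearOrder α] (V : Finset α) (p : α → Option α) : Prop :=
  ∀ v ∈ V, ∀ w, p v = some w → w ∈ V ∧ v < w

/-- One round of the linearization dynamics: every non-maximum child of a node `x`
gets the maximum child of `x` as its new predecessor; all other nodes keep their
predecessor. -/
def roundStep {α : Type*} [LinearOrder α] (V : Finset α) (p : α → Option α) :
    α → Option α := fun v =>
  match p v with
  | none => none
  | some x =>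
    if h : (V.filter (fun w => p w = some x)).Nonempty then
      if v = (V.filter (fun w => p w = some x)).max' h then some x
      else some ((V.filter (fun w => p w = some x)).max' h)
    else some x

/-- `H` is the heap with head `h`: `h` is a head, and `H` consists exactly of the nodes of
`V` from which iterating `p` reaches `h`. -/
def IsHeap {α : Type*} (V : Finset α) (p : α → Option α) (H : Finset α) (h : α) : Prop :=
  h ∈ V ∧ p h = none ∧ ∀ v, v ∈ H ↔ v ∈ V ∧ ∃ k, pIter p k v = some h

/-- The heap `H` with head `h` is linearized with respect to `u`: every non-head node
`v ∈ H` with `v ≥ u` is the maximum among all nodes with the same predecessor. -/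
def LinearizedWrt {α : Type*} [LinearOrder α] (V : Finset α) (p : α → Option α)
    (H : Finset α) (h u : α) : Prop :=
  ∀ v ∈ H, v ≠ h → u ≤ v → ∀ w ∈ V, p w = p v → w ≤ v

/-!
Merging turns `H_i ∪ H_j` into a single heap `H` with head `max hi hj`: every edge of `p` is
still an edge, and the head of one heap now points into the other. Call a node `v` of `H`
linked when its predecessor is the next larger node of `H` and `v` is that node's only child.
If every non-head node of `H` above `v` is linked, then `v` is linked after one more round:
its predecessor `x` is already its successor in `H` (otherwise the largest node of `H` below
`x` would be a second, linked, child of `x`), so `v` is the maximum child of `x` and keeps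
`x`, and no other node is redirected to `x`, since `x` is the only child of its own
predecessor. Hence after `t` rounds every node with at most `t` larger nodes in `H` is
linked, and a node `v ≥ u` of `H` has fewer than `|{v ∈ H_i : v ≥ u}| + |H_j|` larger nodes.
-/

open Relation Function

section Reachability

variable {α : Type*}

def PredRel (p : α → Option α) (v x : α) : Prop := p v = some x

variable {p : α → Option α} {v h h' : α}

theorem reflTransGen_predRel_iff_exists_pIter :
    ReflTransGen (PredRel p) v h ↔ ∃ k, pIter p k v = some h := by
  constructor
  · intro hvh
    induction hvh using ReflTransGen.head_induction_on with
    | refl => exact ⟨0, rfl⟩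
    | head hvx _ ih =>
      obtain ⟨k, hk⟩ := ih
      exact ⟨k + 1, by rw [pIter, show p _ = _ from hvx]; exact hk⟩
  · rintro ⟨k, hk⟩
    induction k generalizing v with
    | zero => exact Option.some_injective _ hk ▸ ReflTransGen.refl
    | succ k ih =>
      cases hx : p v with
      | none => simp [pIter, hx] at hk
      | some x => exact ReflTransGen.head hx (ih (by simpa [pIter, hx] using hk))

namespace PredRel

theorem rightUnique : Relator.RightUnique (PredRel p) :=
  fun _ _ _ hb hc => Option.some_injective _ (hb.symm.trans hc)

theorem eq_of_reflTransGen_of_eq_none (hh : p h = none) (hhv : ReflTransGen (PredRel p) h v) :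
    v = h := by
  rcases hhv.cases_head with rfl | ⟨c, hc, _⟩
  · rfl
  · simp [PredRel, hh] at hc

theorem head_unique (hvh : ReflTransGen (PredRel p) v h) (hvh' : ReflTransGen (PredRel p) v h')
    (hh : p h = none) (hh' : p h' = none) : h = h' := by
  rcases hvh.total_of_right_unique rightUnique hvh' with hhh' | hh'h
  · exact (eq_of_reflTransGen_of_eq_none hh hhh').symm
  · exact eq_of_reflTransGen_of_eq_none hh' hh'h

end PredRel

end Reachability

section HeapProp

variable {α : Type*} [LinearOrder α] {V : Finset α} {p : α → Option α} {v h : α}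

theorem HeapProp.mem_le_of_reflTransGen (hp : HeapProp V p) (hv : v ∈ V)
    (hvh : ReflTransGen (PredRel p) v h) : h ∈ V ∧ v ≤ h := by
  induction hvh with
  | refl => exact ⟨hv, le_rfl⟩
  | tail _ hbc ih => exact ⟨(hp _ ih.1 _ hbc).1, ih.2.trans (hp _ ih.1 _ hbc).2.le⟩

theorem HeapProp.exists_head (hp : HeapProp V p) (hv : v ∈ V) :
    ∃ h, p h = none ∧ ReflTransGen (PredRel p) v h := by
  classical
  set S := V.filter (ReflTransGen (PredRel p) v)
  have hS : S.Nonempty := ⟨v, Finset.mem_filter.2 ⟨hv, ReflTransGen.refl⟩⟩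
  obtain ⟨hmV, hvm⟩ := Finset.mem_filter.1 (S.max'_mem hS)
  refine ⟨S.max' hS, ?_, hvm⟩
  by_contra hm
  obtain ⟨x, hx⟩ := Option.ne_none_iff_exists'.1 hm
  obtain ⟨hxV, hmx⟩ := hp _ hmV x hx
  exact (S.le_max' x (Finset.mem_filter.2 ⟨hxV, hvm.tail hx⟩)).not_gt hmx

end HeapProp

namespace IsHeap

variable {α : Type*} {V H : Finset α} {p : α → Option α} {h v w x : α}

theorem mem_iff (hH : IsHeap V p H h) : v ∈ H ↔ v ∈ V ∧ ReflTransGen (PredRel p) v h := by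
  rw [hH.2.2, reflTransGen_predRel_iff_exists_pIter]

theorem subset (hH : IsHeap V p H h) : H ⊆ V := fun _ hv => (hH.mem_iff.1 hv).1

theorem head_mem (hH : IsHeap V p H h) : h ∈ H := hH.mem_iff.2 ⟨hH.1, ReflTransGen.refl⟩

theorem mem_of_predRel (hH : IsHeap V p H h) (hw : w ∈ V) (hwx : p w = some x) (hx : x ∈ H) :
    w ∈ H :=
  hH.mem_iff.2 ⟨hw, ReflTransGen.head hwx (hH.mem_iff.1 hx).2⟩

theorem exists_parent (hH : IsHeap V p H h) (hv : v ∈ H) (hne : v ≠ h) :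
    ∃ x, p v = some x := by
  rcases (hH.mem_iff.1 hv).2.cases_head with rfl | ⟨c, hc, _⟩
  · exact absurd rfl hne
  · exact ⟨c, hc⟩

variable [LinearOrder α]

theorem parent_mem (hp : HeapProp V p) (hH : IsHeap V p H h) (hv : v ∈ H) (hvx : p v = some x) :
    x ∈ H := by
  obtain ⟨hvV, hvh⟩ := hH.mem_iff.1 hv
  rcases hvh.cases_head with rfl | ⟨c, hc, hch⟩
  · simp [hH.2.1] at hvx
  · obtain rfl : x = c := Option.some_injective _ (hvx.symm.trans hc)
    exact hH.mem_iff.2 ⟨(hp v hvV x hvx).1, hch⟩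

theorem le_head (hp : HeapProp V p) (hH : IsHeap V p H h) (hv : v ∈ H) : v ≤ h :=
  (hp.mem_le_of_reflTransGen (hH.subset hv) (hH.mem_iff.1 hv).2).2

end IsHeap

section RoundStep

variable {α : Type*} [LinearOrder α] {V H : Finset α} {p : α → Option α} {h v w x m : α}

def children (V : Finset α) (p : α → Option α) (x : α) : Finset α :=
  V.filter (fun w => p w = some x)

@[simp]
theorem mem_children : w ∈ children V p x ↔ w ∈ V ∧ p w = some x := Finset.mem_filter

theorem roundStep_eq_none (hv : p v = none) : roundStep V p v = none := by
  simp [roundStep, hv]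

theorem roundStep_of_eq_some (hx : p v = some x) :
    roundStep V p v =
      if hne : (children V p x).Nonempty then
        if v = (children V p x).max' hne then some x else some ((children V p x).max' hne)
      else some x := by
  simp only [roundStep, hx]
  rfl

theorem roundStep_eq_of_isGreatest (hx : p v = some x)
    (hm : IsGreatest (children V p x : Set α) m) :
    roundStep V p v = if v = m then some x else some m := by
  have hne : (children V p x).Nonempty := ⟨m, hm.1⟩
  rw [roundStep_of_eq_some hx, dif_pos hne, ((children V p x).isGreatest_max' hne).unique hm]

theorem roundStep_eq_some_or (hx : p v = some x) :
    roundStep V p v = some x ∨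
      ∃ m, IsGreatest (children V p x : Set α) m ∧ v ≠ m ∧ roundStep V p v = some m := by
  by_cases hne : (children V p x).Nonempty
  · have hm := (children V p x).isGreatest_max' hne
    rw [roundStep_eq_of_isGreatest hx hm]
    split_ifs with hv
    · exact Or.inl rfl
    · exact Or.inr ⟨_, hm, hv, rfl⟩
  · exact Or.inl (by rw [roundStep_of_eq_some hx, dif_neg hne])

theorem reflTransGen_roundStep (hvh : ReflTransGen (PredRel p) v h) :
    ReflTransGen (PredRel (roundStep V p)) v h := by
  refine ReflTransGen.lift' id (fun a b hab => ?_) _ _ hvh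
  rcases roundStep_eq_some_or (V := V) hab with hb | ⟨m, hm, -, ham⟩
  · exact ReflTransGen.single hb
  · have hmb : roundStep V p m = some b := by
      rw [roundStep_eq_of_isGreatest (mem_children.1 hm.1).2 hm, if_pos rfl]
    exact ReflTransGen.head ham (ReflTransGen.single hmb)

theorem heapProp_roundStep (hp : HeapProp V p) : HeapProp V (roundStep V p) := by
  intro v hv z hz
  cases hx : p v with
  | none => simp [roundStep_eq_none hx] at hz
  | some x =>
    rcases roundStep_eq_some_or (V := V) hx with hvx | ⟨m, hm, hvm, hvm'⟩
    · obtain rfl : z = x := Option.some_injective _ (hz.symm.trans hvx)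
      exact hp v hv z hx
    · obtain rfl := Option.some_injective _ (hvm'.symm.trans hz)
      exact ⟨(mem_children.1 hm.1).1, lt_of_le_of_ne (hm.2 (mem_children.2 ⟨hv, hx⟩)) hvm⟩

theorem isHeap_roundStep (hp : HeapProp V p) (hH : IsHeap V p H h) :
    IsHeap V (roundStep V p) H h := by
  refine ⟨hH.1, roundStep_eq_none hH.2.1, fun v => ?_⟩
  rw [← reflTransGen_predRel_iff_exists_pIter]
  refine ⟨fun hv => ⟨hH.subset hv, reflTransGen_roundStep (hH.mem_iff.1 hv).2⟩, ?_⟩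
  rintro ⟨hvV, hvh⟩
  obtain ⟨h₀, hh₀, hvh₀⟩ := hp.exists_head hvV
  obtain rfl : h = h₀ := PredRel.head_unique hvh (reflTransGen_roundStep hvh₀)
    (roundStep_eq_none hH.2.1) (roundStep_eq_none hh₀)
  exact hH.mem_iff.2 ⟨hvV, hvh₀⟩

theorem heapProp_iterate_roundStep (hp : HeapProp V p) (n : ℕ) :
    HeapProp V ((roundStep V)^[n] p) := by
  induction n with
  | zero => exact hp
  | succ n ih => rw [iterate_succ_apply']; exact heapProp_roundStep ih

theorem isHeap_iterate_roundStep (hp : HeapProp V p) (hH : IsHeap V p H h) (n : ℕ) :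
    IsHeap V ((roundStep V)^[n] p) H h := by
  induction n with
  | zero => exact hH
  | succ n ih =>
    rw [iterate_succ_apply']
    exact isHeap_roundStep (heapProp_iterate_roundStep hp n) ih

end RoundStep

section Linked

variable {α : Type*} [LinearOrder α] {V H : Finset α} {p : α → Option α} {h u v w x : α}

def Linked (V H : Finset α) (p : α → Option α) (v : α) : Prop :=
  ∃ s, p v = some s ∧ (∀ w ∈ H, v < w → s ≤ w) ∧ children V p s = {v}

theorem Linked.eq_of_apply_eq (hl : Linked V H p v) (hw : w ∈ V) (hwv : p w = p v) : w = v := by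
  obtain ⟨s, hs, -, hch⟩ := hl
  simpa [hch] using mem_children.2 ⟨hw, hwv.trans hs⟩

theorem IsHeap.parent_le_of_linked (hp : HeapProp V p) (hH : IsHeap V p H h) (hv : v ∈ H)
    (hvx : p v = some x) (habove : ∀ w ∈ H, v < w → w ≠ h → Linked V H p w) (hw : w ∈ H)
    (hvw : v < w) : x ≤ w := by
  by_contra! hwx
  set S := H.filter (· < x)
  have hwS : w ∈ S := Finset.mem_filter.2 ⟨hw, hwx⟩
  obtain ⟨hv'H, hv'x⟩ := Finset.mem_filter.1 (S.max'_mem ⟨w, hwS⟩)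
  set v' := S.max' ⟨w, hwS⟩
  have hvv' : v < v' := hvw.trans_le (S.le_max' w hwS)
  have hxH := hH.parent_mem hp hv hvx
  obtain ⟨s, hs, hsmin, hch⟩ := habove v' hv'H hvv' (hv'x.trans_le (hH.le_head hp hxH)).ne
  have hsx : s = x := by
    refine le_antisymm (hsmin x hxH hv'x) (not_lt.1 fun hsx => ?_)
    have := S.le_max' s (Finset.mem_filter.2 ⟨hH.parent_mem hp hv'H hs, hsx⟩)
    exact this.not_gt (hp v' (hH.subset hv'H) s hs).2
  have : v ∈ children V p s := mem_children.2 ⟨hH.subset hv, hsx ▸ hvx⟩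
  rw [hch, Finset.mem_singleton] at this
  exact hvv'.ne this

theorem IsHeap.linked_roundStep (hp : HeapProp V p) (hH : IsHeap V p H h) (hv : v ∈ H)
    (hne : v ≠ h) (habove : ∀ w ∈ H, v < w → w ≠ h → Linked V H p w) :
    Linked V H (roundStep V p) v := by
  obtain ⟨x, hvx⟩ := hH.exists_parent hv hne
  have hxH := hH.parent_mem hp hv hvx
  have hvx_lt : v < x := (hp v (hH.subset hv) x hvx).2
  have hsucc : ∀ w ∈ H, v < w → x ≤ w := fun w hw hvw =>
    hH.parent_le_of_linked hp hv hvx habove hw hvw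
  have hvmax : IsGreatest (children V p x : Set α) v := by
    refine ⟨mem_children.2 ⟨hH.subset hv, hvx⟩, fun w hw => ?_⟩
    obtain ⟨hwV, hwx⟩ := mem_children.1 hw
    exact not_lt.1 fun hvw =>
      (hsucc w (hH.mem_of_predRel hwV hwx hxH) hvw).not_gt (hp w hwV x hwx).2
  have hvx' : roundStep V p v = some x := by
    rw [roundStep_eq_of_isGreatest hvx hvmax, if_pos rfl]
  refine ⟨x, hvx', hsucc, Finset.eq_singleton_iff_unique_mem.2
    ⟨mem_children.2 ⟨hH.subset hv, hvx'⟩, fun w hw => ?_⟩⟩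
  obtain ⟨hwV, hwx⟩ := mem_children.1 hw
  cases hwy : p w with
  | none => simp [roundStep_eq_none hwy] at hwx
  | some y =>
    rcases roundStep_eq_some_or (V := V) hwy with hwy' | ⟨m, hm, hwm, hwm'⟩
    · obtain rfl : y = x := Option.some_injective _ (hwy'.symm.trans hwx)
      rw [roundStep_eq_of_isGreatest hwy hvmax] at hwx
      split_ifs at hwx with hwv
      · exact hwv
      · exact absurd (Option.some_injective _ hwx) hvx_lt.ne
    · obtain rfl : x = m := Option.some_injective _ (hwx.symm.trans hwm')
      obtain ⟨-, hxy⟩ := mem_children.1 hm.1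
      have hxh : x ≠ h := by rintro rfl; simp [hH.2.1] at hxy
      exact absurd ((habove x hxH hvx_lt hxh).eq_of_apply_eq hwV (hwy.trans hxy.symm)) hwm

theorem IsHeap.linked_iterate_roundStep (hp : HeapProp V p) (hH : IsHeap V p H h) {n : ℕ}
    (hv : v ∈ H) (hne : v ≠ h) (hrank : (H.filter (v < ·)).card ≤ n) :
    Linked V H ((roundStep V)^[n] p) v := by
  induction n generalizing v with
  | zero =>
    have : h ∈ H.filter (v < ·) :=
      Finset.mem_filter.2 ⟨hH.head_mem, (hH.le_head hp hv).lt_of_ne hne⟩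
    exact absurd (Finset.card_pos.2 ⟨h, this⟩) (by omega)
  | succ n ih =>
    rw [iterate_succ_apply']
    refine (isHeap_iterate_roundStep hp hH n).linked_roundStep (heapProp_iterate_roundStep hp n)
      hv hne fun w hw hvw hwh => ih hw hwh ?_
    have : (H.filter (w < ·)).card < (H.filter (v < ·)).card :=
      Finset.card_lt_card <| (Finset.ssubset_iff_of_subset
        (Finset.monotone_filter_right H fun _ _ => hvw.trans)).2 ⟨w, by simp [hw, hvw]⟩
    omega

theorem IsHeap.linearizedWrt_iterate_roundStep (hp : HeapProp V p) (hH : IsHeap V p H h)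
    {n : ℕ} (hu : (H.filter (u ≤ ·)).card ≤ n + 1) :
    LinearizedWrt V ((roundStep V)^[n] p) H h u := by
  intro v hv hne huv w hw hwv
  refine ((hH.linked_iterate_roundStep hp hv hne ?_).eq_of_apply_eq hw hwv).le
  have hsub : insert v (H.filter (v < ·)) ⊆ H.filter (u ≤ ·) := by
    intro z hz
    rw [Finset.mem_insert, Finset.mem_filter] at hz
    rcases hz with rfl | ⟨hz, hvz⟩
    · exact Finset.mem_filter.2 ⟨hv, huv⟩
    · exact Finset.mem_filter.2 ⟨hz, huv.trans hvz.le⟩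
  have := Finset.card_le_card hsub
  rw [Finset.card_insert_of_notMem (by simp)] at this
  omega

end Linked

section Merge

variable {α : Type*} [LinearOrder α] {V Hi Hj : Finset α} {p : α → Option α}
  {a b c hi hj w : α}

theorem predRel_update_of_predRel (ha : p a = none) (hbc : PredRel p b c) :
    PredRel (update p a (some w)) b c := by
  have hba : b ≠ a := by rintro rfl; simp [PredRel, ha] at hbc
  rwa [PredRel, update_of_ne hba]

theorem heapProp_update (hp : HeapProp V p) (hw : w ∈ V) (haw : a < w) :
    HeapProp V (update p a (some w)) := by
  intro v hv z hz
  by_cases hva : v = a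
  · subst hva
    obtain rfl : z = w := Option.some_injective _ (by simpa using hz.symm)
    exact ⟨hw, haw⟩
  · rw [update_of_ne hva] at hz
    exact hp v hv z hz

theorem IsHeap.union_update (hp : HeapProp V p) (hHi : IsHeap V p Hi hi)
    (hHj : IsHeap V p Hj hj) (hw : w ∈ Hj) (hlt : hi < w) :
    IsHeap V (update p hi (some w)) (Hi ∪ Hj) hj := by
  have hlift : ∀ {v h}, ReflTransGen (PredRel p) v h →
      ReflTransGen (PredRel (update p hi (some w))) v h :=
    ReflTransGen.mono (fun _ _ => predRel_update_of_predRel hHi.2.1) _ _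
  have hij : hi ≠ hj := (hlt.trans_le (hHj.le_head hp hw)).ne
  have hj_head : update p hi (some w) hj = none := by rw [update_of_ne hij.symm]; exact hHj.2.1
  refine ⟨hHj.1, hj_head, fun v => ?_⟩
  rw [← reflTransGen_predRel_iff_exists_pIter, Finset.mem_union]
  constructor
  · rintro (hv | hv)
    · obtain ⟨hvV, hvhi⟩ := hHi.mem_iff.1 hv
      exact ⟨hvV, (hlift hvhi).trans (.head (update_self ..) (hlift (hHj.mem_iff.1 hw).2))⟩
    · obtain ⟨hvV, hvhj⟩ := hHj.mem_iff.1 hv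
      exact ⟨hvV, hlift hvhj⟩
  · rintro ⟨hvV, hvhj⟩
    obtain ⟨h₀, hh₀, hvh₀⟩ := hp.exists_head hvV
    by_cases h₀i : h₀ = hi
    · exact Or.inl (hHi.mem_iff.2 ⟨hvV, h₀i ▸ hvh₀⟩)
    · obtain rfl : h₀ = hj :=
        PredRel.head_unique (hlift hvh₀) hvhj (by rwa [update_of_ne h₀i]) hj_head
      exact Or.inr (hHj.mem_iff.2 ⟨hvV, hvh₀⟩)

end Merge

theorem stmt4_general {α : Type*} [LinearOrder α] (V : Finset α) (p : α → Option α)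
    (hp : HeapProp V p)
    (Hi Hj : Finset α) (hi hj : α)
    (hHi : IsHeap V p Hi hi) (hHj : IsHeap V p Hj hj)
    (p₁ : α → Option α)
    (hmerge :
      (∃ w ∈ Hj, hi < w ∧ p₁ hi = some w ∧ ∀ v, v ≠ hi → p₁ v = p v) ∨
      (∃ w ∈ Hi, hj < w ∧ p₁ hj = some w ∧ ∀ v, v ≠ hj → p₁ v = p v)) :
    ∀ u ∈ Hi, ∀ i : ℕ, (Hi.filter (fun v => u ≤ v)).card + Hj.card ≤ i →
      LinearizedWrt V ((fun q => roundStep V q)^[i] p₁) (Hi ∪ Hj) (max hi hj) u := by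
  intro u _ i hbound
  have hcard : ((Hi ∪ Hj).filter (u ≤ ·)).card ≤ i + 1 := by
    rw [Finset.filter_union]
    have := Finset.card_union_le (Hi.filter (u ≤ ·)) (Hj.filter (u ≤ ·))
    have := Finset.card_filter_le Hj (u ≤ ·)
    omega
  rcases hmerge with ⟨w, hw, hlt, h1, h2⟩ | ⟨w, hw, hlt, h1, h2⟩
  · obtain rfl : p₁ = update p hi (some w) := eq_update_iff.2 ⟨h1, h2⟩
    rw [max_eq_right (hlt.trans_le (hHj.le_head hp hw)).le]
    exact (hHi.union_update hp hHj hw hlt).linearizedWrt_iterate_roundStep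
      (heapProp_update hp (hHj.subset hw) hlt) hcard
  · obtain rfl : p₁ = update p hj (some w) := eq_update_iff.2 ⟨h1, h2⟩
    rw [max_eq_left (hlt.trans_le (hHi.le_head hp hw)).le]
    rw [Finset.union_comm] at hcard ⊢
    exact (hHj.union_update hp hHi hw hlt).linearizedWrt_iterate_roundStep
      (heapProp_update hp (hHi.subset hw) hlt) hcard

/-- If two disjoint heaps `H_i` (head `hi`) and `H_j` (head `hj`) are merged into one heap
`H = H_i ∪ H_j` — by assigning to the head of one of them a predecessor lying in the other
heap, consistently with the max-heap property, all other predecessors unchanged — then for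
every `u ∈ H_i` the merged heap becomes linearized with respect to `u` after at most
`|{v ∈ H_i : v ≥ u}| + |H_j|` rounds of the linearization dynamics; i.e. merging with `H_j`
increases the linearization time of `u` by at most `|H_j|`. -/
theorem stmt4 {α : Type*} [LinearOrder α] (V : Finset α) (p : α → Option α)
    (hp : HeapProp V p)
    (Hi Hj : Finset α) (hi hj : α)
    (hHi : IsHeap V p Hi hi) (hHj : IsHeap V p Hj hj)
    (hdisj : Disjoint Hi Hj)
    (p₁ : α → Option α)
    (hmerge :
      (∃ w ∈ Hj, hi < w ∧ p₁ hi = some w ∧ ∀ v, v ≠ hi → p₁ v = p v) ∨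
      (∃ w ∈ Hi, hj < w ∧ p₁ hj = some w ∧ ∀ v, v ≠ hj → p₁ v = p v)) :
    ∀ u ∈ Hi, ∀ i : ℕ, (Hi.filter (fun v => u ≤ v)).card + Hj.card ≤ i →
      LinearizedWrt V ((fun q => roundStep V q)^[i] p₁) (Hi ∪ Hj) (max hi hj) u :=
  stmt4_general V p hp Hi Hj hi hj hHi hHj p₁ hmerge
end

section
/- If a heap H is linearized with respect to a node u ∈ H, then after one round of the linearization dynamics the heap on the vertex set H is again linearized with respect to u (the linearized prefix of a heap is preserved by the dynamics). -/
/-!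
Let `p v = x`. Linearity at `v` says that `v` is the maximum child of `x`, so the round
leaves `p v = x` in place. A node `w` that points to `x` after the round either already did,
and then `w ≤ v`, or was a non-maximum child of `p x` promoted to its maximum sibling `x`, so
`w < x`. In the second case `w > v ≥ u` is impossible: `w` is a sibling of `x`, hence in the
heap, and linearity at `w` would make `w` the maximum child of `p x`, i.e. `x ≤ w`.
-/

section RoundStep

variable {α : Type*} [LinearOrder α] {V : Finset α} {p : α → Option α} {v w x : α}

theorem roundStep_eq_of_forall_le (hv : v ∈ V) (hmax : ∀ w ∈ V, p w = p v → w ≤ v) :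
    roundStep V p v = p v := by
  unfold roundStep
  cases hpv : p v with
  | none => rfl
  | some x =>
    set S := V.filter (fun w => p w = some x)
    have hvS : v ∈ S := Finset.mem_filter.2 ⟨hv, hpv⟩
    have hSmax : S.max' ⟨v, hvS⟩ = v := le_antisymm
      (let hm := Finset.mem_filter.1 (S.max'_mem ⟨v, hvS⟩); hmax _ hm.1 (hm.2.trans hpv.symm))
      (S.le_max' v hvS)
    dsimp only
    rw [dif_pos ⟨v, hvS⟩, if_pos hSmax.symm]

theorem roundStep_eq_some (hw : w ∈ V) (hwx : roundStep V p w = some x) :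
    p w = some x ∨ ∃ y, p w = some y ∧ p x = some y ∧ x ∈ V ∧ w < x := by
  unfold roundStep at hwx
  cases hpw : p w with
  | none => simp [hpw] at hwx
  | some y =>
    set S := V.filter (fun z => p z = some y)
    have hwS : w ∈ S := Finset.mem_filter.2 ⟨hw, hpw⟩
    simp only [hpw] at hwx
    rw [dif_pos ⟨w, hwS⟩] at hwx
    split_ifs at hwx with hwmax
    · exact .inl hwx
    · have hSmax : S.max' ⟨w, hwS⟩ = x := Option.some_injective _ hwx
      obtain ⟨hxV, hpx⟩ := Finset.mem_filter.1 (hSmax ▸ S.max'_mem ⟨w, hwS⟩)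
      exact .inr ⟨y, rfl, hpx, hxV,
        hSmax ▸ lt_of_le_of_ne (S.le_max' w hwS) (fun e => hwmax (e ▸ rfl))⟩

end RoundStep

namespace IsHeap

variable {α : Type*} {V : Finset α} {p : α → Option α} {H : Finset α} {h v w x : α}

theorem mem_finset (hH : IsHeap V p H h) (hv : v ∈ H) : v ∈ V :=
  ((hH.2.2 v).1 hv).1

theorem ne_head_of_pred_eq_some (hH : IsHeap V p H h) (hvx : p v = some x) : v ≠ h := by
  rintro rfl
  simp [hH.2.1] at hvx

theorem exists_pred_reaches_head (hH : IsHeap V p H h) (hv : v ∈ H) (hvh : v ≠ h) :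
    ∃ x k, p v = some x ∧ pIter p k x = some h := by
  obtain ⟨-, k, hk⟩ := (hH.2.2 v).1 hv
  cases k with
  | zero => exact absurd (Option.some_injective _ hk) hvh
  | succ k =>
    cases hpv : p v with
    | none => simp [pIter, hpv] at hk
    | some x => exact ⟨x, k, rfl, by simpa [pIter, hpv] using hk⟩

theorem pred_mem (hH : IsHeap V p H h) (hv : v ∈ H) (hvx : p v = some x) (hx : x ∈ V) :
    x ∈ H := by
  obtain ⟨x', k, hvx', hk⟩ := hH.exists_pred_reaches_head hv (hH.ne_head_of_pred_eq_some hvx)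
  obtain rfl : x' = x := Option.some_injective _ (hvx'.symm.trans hvx)
  exact (hH.2.2 x').2 ⟨hx, k, hk⟩

theorem mem_of_pred_eq (hH : IsHeap V p H h) (hv : v ∈ H) (hvh : v ≠ h) (hw : w ∈ V)
    (hwv : p w = p v) : w ∈ H := by
  obtain ⟨x, k, hvx, hk⟩ := hH.exists_pred_reaches_head hv hvh
  exact (hH.2.2 w).2 ⟨hw, k + 1, by simpa [pIter, hwv, hvx] using hk⟩

end IsHeap

theorem stmt6_general {α : Type*} [LinearOrder α] (V : Finset α) (p : α → Option α)
    (H : Finset α) (h : α) (hheap : IsHeap V p H h)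
    (u : α)
    (hlin : LinearizedWrt V p H h u) :
    LinearizedWrt V (roundStep V p) H h u := by
  intro v hv hvh huv w hw hwv
  have hvmax := hlin v hv hvh huv
  obtain ⟨x, -, hvx, -⟩ := hheap.exists_pred_reaches_head hv hvh
  rw [roundStep_eq_of_forall_le (hheap.mem_finset hv) hvmax, hvx] at hwv
  rcases roundStep_eq_some hw hwv with hwx | ⟨y, hwy, hxy, hxV, hwx⟩
  · exact hvmax w hw (hwx.trans hvx.symm)
  · by_contra! hvw
    have hxH := hheap.pred_mem hv hvx hxV
    have hwH :=
      hheap.mem_of_pred_eq hxH (hheap.ne_head_of_pred_eq_some hxy) hw (hwy.trans hxy.symm)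
    have hxw := hlin w hwH (hheap.ne_head_of_pred_eq_some hwy) (huv.trans hvw.le) x hxV
      (hxy.trans hwy.symm)
    exact hxw.not_gt hwx

/-- If a heap `H` with head `h` is linearized with respect to a node `u ∈ H`, then after one
round of the linearization dynamics the heap on the vertex set `H` is again linearized with
respect to `u`: the linearized prefix of a heap is preserved by the dynamics. -/
theorem stmt6 {α : Type*} [LinearOrder α] (V : Finset α) (p : α → Option α)
    (hp : HeapProp V p) (H : Finset α) (h : α) (hheap : IsHeap V p H h)
    (u : α) (hu : u ∈ H)
    (hlin : LinearizedWrt V p H h u) :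
    LinearizedWrt V (roundStep V p) H h u :=
  stmt6_general V p H h hheap u hlin
end
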